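/- Let k(x,y) = −Σ_{n=1}^∞ (−1)ⁿ nπ e^{D₀(λ − n²π²)(x−y)} p_n for 0 ≤ y ≤ x ≤ 1, with λ < π², D₀ > 0, and Σ (nπ)² p_n² < ∞. Then there exists a constant B₃ > 0 such that for every g ∈ L²(0,1), ∫₀¹ (∫₀ˣ k(x,y) g(y) dy)² dx ≤ B₃ · ∫₀¹ g(y)² dy. -/

import Mathlib

/-!
For `t > 0` the kernel is `K(t) = Σ aₙ e^{cₙ t}` with `Σ aₙ² < ∞` and `cₙ ≤ -β (n+1)²`, where
`β = D₀(π² - λ) > 0`. Since `e^{cₙ t} ≤ 1`, Cauchy–Schwarz over `n` gives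
`K(t)² ≤ (Σ aₙ²) · Σ e^{cₙ t}`, and integrating term by term,
`∫₀ˣ Σ e^{cₙ (x - y)} dy ≤ Σ 1 / (β (n+1)²) < ∞`. Cauchy–Schwarz in `y` then bounds
`(∫₀ˣ k(x,y) g(y) dy)²` by `(Σ aₙ²) (Σ 1 / (β (n+1)²)) ‖g‖²`, uniformly in `x ∈ [0,1]`.
-/

open MeasureTheory Real

open scoped ENNReal

theorem sq_tsum_le_tsum_mul_tsum_of_sq_le_mul {ι : Type*} {r f g : ι → ℝ}
    (hf : ∀ i, 0 ≤ f i) (hg : ∀ i, 0 ≤ g i) (hfs : Summable f) (hgs : Summable g)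
    (hr : ∀ i, r i ^ 2 ≤ f i * g i) :
    Summable r ∧ (∑' i, r i) ^ 2 ≤ (∑' i, f i) * ∑' i, g i := by
  have hrs : Summable r := by
    refine ((hfs.add hgs).div_const 2).of_norm_bounded fun i => ?_
    rw [Real.norm_eq_abs]
    nlinarith [sq_abs (r i), abs_nonneg (r i), sq_nonneg (f i - g i), hr i, hf i, hg i]
  refine ⟨hrs, le_of_tendsto' (hrs.hasSum.pow 2) fun s => ?_⟩
  calc (∑ i ∈ s, r i) ^ 2 ≤ (∑ i ∈ s, f i) * ∑ i ∈ s, g i :=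
        s.sum_sq_le_sum_mul_sum_of_sq_le_mul (fun i _ => hf i) (fun i _ => hg i) fun i _ => hr i
    _ ≤ (∑' i, f i) * ∑' i, g i :=
        mul_le_mul (hfs.sum_le_tsum s fun i _ => hf i) (hgs.sum_le_tsum s fun i _ => hg i)
          (s.sum_nonneg fun i _ => hg i) (tsum_nonneg hf)

/-- `f` need not be measurable: if `f * g` is not integrable, its integral is `0`. -/
theorem sq_integral_mul_le_of_sq_le {α : Type*} [MeasurableSpace α] {μ : Measure α}
    {f w g : α → ℝ} (hw : Integrable w μ) (hfw : ∀ᵐ a ∂μ, f a ^ 2 ≤ w a) (hg : MemLp g 2 μ) :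
    (∫ a, f a * g a ∂μ) ^ 2 ≤ (∫ a, w a ∂μ) * ∫ a, g a ^ 2 ∂μ := by
  have hw0 : 0 ≤ᵐ[μ] w := hfw.mono fun a ha => (sq_nonneg _).trans ha
  have hsqrt : MemLp (fun a => √(w a)) 2 μ := by
    refine (memLp_two_iff_integrable_sq hw.aemeasurable.sqrt.aestronglyMeasurable).mpr
      (hw.congr ?_)
    filter_upwards [hw0] with a ha using (sq_sqrt ha).symm
  have hbound : |∫ a, f a * g a ∂μ| ≤ ∫ a, √(w a) * |g a| ∂μ := by
    refine norm_integral_le_of_norm_le (f := fun a => f a * g a)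
      (g := fun a => √(w a) * |g a|) (hsqrt.integrable_mul hg.abs) ?_
    filter_upwards [hfw] with a ha
    rw [Real.norm_eq_abs, abs_mul]
    exact mul_le_mul_of_nonneg_right (abs_le_sqrt ha) (abs_nonneg _)
  have holder := integral_mul_le_Lp_mul_Lq_of_nonneg HolderConjugate.two_two
    (Filter.Eventually.of_forall fun a => sqrt_nonneg (w a))
    (Filter.Eventually.of_forall fun a => abs_nonneg (g a))
    (by rwa [ENNReal.ofReal_ofNat]) (by rw [ENNReal.ofReal_ofNat]; exact hg.abs)
  have hw_sq : ∫ a, √(w a) ^ 2 ∂μ = ∫ a, w a ∂μ :=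
    integral_congr_ae (hw0.mono fun a ha => sq_sqrt ha)
  simp only [rpow_two, sq_abs, ← sqrt_eq_rpow, hw_sq] at holder
  calc (∫ a, f a * g a ∂μ) ^ 2 = |∫ a, f a * g a ∂μ| ^ 2 := (sq_abs _).symm
    _ ≤ (√(∫ a, w a ∂μ) * √(∫ a, g a ^ 2 ∂μ)) ^ 2 :=
        pow_le_pow_left₀ (abs_nonneg _) (hbound.trans holder) 2
    _ = (∫ a, w a ∂μ) * ∫ a, g a ^ 2 ∂μ := by
        rw [mul_pow, sq_sqrt (integral_nonneg_of_ae hw0),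
          sq_sqrt (integral_nonneg fun a => sq_nonneg _)]

/-- Valued in `ℝ≥0∞`, so that it is measurable and can be integrated term by term without any
summability side conditions. -/
noncomputable def expSum (c : ℕ → ℝ) (t : ℝ) : ℝ≥0∞ := ∑' n, ENNReal.ofReal (exp (c n * t))

section ExpSum

variable {c : ℕ → ℝ} {β t x : ℝ}

@[fun_prop]
theorem measurable_expSum : Measurable (expSum c) :=
  Measurable.tsum fun n => by fun_prop

theorem neg_of_le_neg_mul_sq (hβ : 0 < β) (hc : ∀ n : ℕ, c n ≤ -(β * ((n:ℝ) + 1) ^ 2)) (n : ℕ) :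
    c n < 0 :=
  (hc n).trans_lt (neg_neg_of_pos (by positivity))

theorem summable_exp_mul_of_le_neg_mul_sq (hβ : 0 < β)
    (hc : ∀ n : ℕ, c n ≤ -(β * ((n:ℝ) + 1) ^ 2)) (ht : 0 < t) :
    Summable fun n => exp (c n * t) := by
  refine Summable.of_nonneg_of_le (fun n => (exp_pos _).le) (fun n => ?_)
    (summable_geometric_of_lt_one (exp_nonneg (-(β * t))) (exp_lt_one_iff.mpr (by nlinarith)))
  rw [← exp_nat_mul, exp_le_exp]
  have hn : (n:ℝ) ≤ ((n:ℝ) + 1) ^ 2 := by nlinarith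
  nlinarith [mul_le_mul_of_nonneg_right (hc n) ht.le,
    mul_le_mul_of_nonneg_left hn (mul_pos hβ ht).le]

theorem expSum_toReal (hβ : 0 < β) (hc : ∀ n : ℕ, c n ≤ -(β * ((n:ℝ) + 1) ^ 2)) (ht : 0 < t) :
    (expSum c t).toReal = ∑' n, exp (c n * t) := by
  rw [expSum, ← ENNReal.ofReal_tsum_of_nonneg (fun n => (exp_pos _).le)
    (summable_exp_mul_of_le_neg_mul_sq hβ hc ht),
    ENNReal.toReal_ofReal (tsum_nonneg fun n => (exp_pos _).le)]

theorem sq_tsum_mul_exp_le (hβ : 0 < β) (hc : ∀ n : ℕ, c n ≤ -(β * ((n:ℝ) + 1) ^ 2))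
    (ht : 0 < t) {a : ℕ → ℝ} (ha : Summable fun n => a n ^ 2) :
    (∑' n, a n * exp (c n * t)) ^ 2 ≤ (∑' n, a n ^ 2) * (expSum c t).toReal := by
  rw [expSum_toReal hβ hc ht]
  refine (sq_tsum_le_tsum_mul_tsum_of_sq_le_mul (fun n => sq_nonneg (a n))
    (fun n => (exp_pos _).le) ha (summable_exp_mul_of_le_neg_mul_sq hβ hc ht) fun n => ?_).2
  have hexp : exp (c n * t) ≤ 1 :=
    exp_le_one_iff.mpr (mul_nonpos_of_nonpos_of_nonneg (neg_of_le_neg_mul_sq hβ hc n).le ht.le)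
  rw [mul_pow]
  exact mul_le_mul_of_nonneg_left (by nlinarith [exp_pos (c n * t)]) (sq_nonneg _)

theorem integral_exp_mul_sub_le {c : ℝ} (hc : c < 0) (hx : 0 ≤ x) :
    ∫ y in Set.Ioo 0 x, exp (c * (x - y)) ≤ 1 / -c := by
  have hderiv : ∀ y ∈ Set.uIcc 0 x,
      HasDerivAt (fun y => exp (c * (x - y)) / -c) (exp (c * (x - y))) y := by
    intro y _
    refine ((((hasDerivAt_id' y).const_sub x).const_mul c).exp.div_const (-c)).congr_deriv ?_
    field_simp [hc.ne]
  rw [← integral_Ioc_eq_integral_Ioo, ← intervalIntegral.integral_of_le hx,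
    intervalIntegral.integral_eq_sub_of_hasDerivAt hderiv
      ((by fun_prop : Continuous fun y => exp (c * (x - y))).intervalIntegrable _ _),
    sub_self, mul_zero, exp_zero, sub_zero, ← sub_div]
  exact div_le_div_of_nonneg_right (by linarith [exp_pos (c * x)]) (by linarith)

theorem summable_one_div_mul_add_one_sq (β : ℝ) :
    Summable fun n : ℕ => 1 / (β * ((n:ℝ) + 1) ^ 2) := by
  refine (((summable_nat_add_iff 1).mpr (summable_one_div_nat_pow.mpr one_lt_two)).mul_left
    (1 / β)).congr fun n => ?_
  push_cast
  rw [one_div_mul_one_div]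

theorem lintegral_expSum_sub_le (hβ : 0 < β) (hc : ∀ n : ℕ, c n ≤ -(β * ((n:ℝ) + 1) ^ 2))
    (hx : 0 ≤ x) :
    ∫⁻ y in Set.Ioo 0 x, expSum c (x - y) ≤
      ENNReal.ofReal (∑' n : ℕ, 1 / (β * ((n:ℝ) + 1) ^ 2)) := by
  rw [ENNReal.ofReal_tsum_of_nonneg (fun n => by positivity) (summable_one_div_mul_add_one_sq β)]
  simp only [expSum]
  rw [lintegral_tsum fun n => by fun_prop]
  refine ENNReal.tsum_le_tsum fun n => ?_
  rw [← ofReal_integral_eq_lintegral_ofReal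
    ((by fun_prop : Continuous fun y => exp (c n * (x - y))).integrableOn_Icc.mono_set
      Set.Ioo_subset_Icc_self)
    (Filter.Eventually.of_forall fun y => (exp_pos _).le)]
  refine ENNReal.ofReal_le_ofReal
    ((integral_exp_mul_sub_le (neg_of_le_neg_mul_sq hβ hc n) hx).trans ?_)
  exact one_div_le_one_div_of_le (by positivity) (by linarith [hc n])

theorem integrableOn_expSum_sub (hβ : 0 < β) (hc : ∀ n : ℕ, c n ≤ -(β * ((n:ℝ) + 1) ^ 2))
    (hx : 0 ≤ x) :
    IntegrableOn (fun y => (expSum c (x - y)).toReal) (Set.Ioo 0 x) :=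
  integrable_toReal_of_lintegral_ne_top (by fun_prop)
    ((lintegral_expSum_sub_le hβ hc hx).trans_lt ENNReal.ofReal_lt_top).ne

theorem integral_expSum_sub_le (hβ : 0 < β) (hc : ∀ n : ℕ, c n ≤ -(β * ((n:ℝ) + 1) ^ 2))
    (hx : 0 ≤ x) :
    ∫ y in Set.Ioo 0 x, (expSum c (x - y)).toReal ≤ ∑' n : ℕ, 1 / (β * ((n:ℝ) + 1) ^ 2) := by
  have hmeas : AEMeasurable (fun y => expSum c (x - y)) (volume.restrict (Set.Ioo 0 x)) := by
    fun_prop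
  rw [integral_toReal hmeas (ae_lt_top' hmeas
    ((lintegral_expSum_sub_le hβ hc hx).trans_lt ENNReal.ofReal_lt_top).ne)]
  exact ENNReal.toReal_le_of_le_ofReal (tsum_nonneg fun n => by positivity)
    (lintegral_expSum_sub_le hβ hc hx)

end ExpSum

section VolterraKernel

variable {c a : ℕ → ℝ} {β : ℝ} {k : ℝ → ℝ → ℝ} {g : ℝ → ℝ}

theorem sq_integral_kernel_mul_le (hβ : 0 < β) (hc : ∀ n : ℕ, c n ≤ -(β * ((n:ℝ) + 1) ^ 2))
    (ha : Summable fun n => a n ^ 2)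
    (hk : ∀ x y, 0 ≤ y → y ≤ x → x ≤ 1 → k x y = ∑' n, a n * exp (c n * (x - y)))
    (hg : MemLp g 2 (volume.restrict (Set.Ioc 0 1))) {x : ℝ} (hx0 : 0 ≤ x) (hx1 : x ≤ 1) :
    (∫ y in 0..x, k x y * g y) ^ 2 ≤
      (∑' n, a n ^ 2) * (∑' n : ℕ, 1 / (β * ((n:ℝ) + 1) ^ 2)) * ∫ y in Set.Ioc 0 1, g y ^ 2 := by
  have hsub : Set.Ioo 0 x ⊆ Set.Ioc 0 1 :=
    Set.Ioo_subset_Ioc_self.trans (Set.Ioc_subset_Ioc_right hx1)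
  have hkw : ∀ᵐ y ∂volume.restrict (Set.Ioo 0 x),
      k x y ^ 2 ≤ (∑' n, a n ^ 2) * (expSum c (x - y)).toReal := by
    filter_upwards [ae_restrict_mem measurableSet_Ioo] with y hy
    rw [hk x y hy.1.le hy.2.le hx1]
    exact sq_tsum_mul_exp_le hβ hc (sub_pos.mpr hy.2) ha
  rw [intervalIntegral.integral_of_le hx0, integral_Ioc_eq_integral_Ioo]
  refine (sq_integral_mul_le_of_sq_le ((integrableOn_expSum_sub hβ hc hx0).const_mul _) hkw
    (hg.mono_measure (Measure.restrict_mono hsub le_rfl))).trans ?_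
  rw [integral_const_mul, mul_assoc, mul_assoc]
  refine mul_le_mul_of_nonneg_left (mul_le_mul (integral_expSum_sub_le hβ hc hx0) ?_
    (integral_nonneg fun _ => sq_nonneg _) (tsum_nonneg fun n => by positivity))
    (tsum_nonneg fun n => sq_nonneg _)
  exact setIntegral_mono_set ((memLp_two_iff_integrable_sq hg.1).mp hg)
    (Filter.Eventually.of_forall fun _ => sq_nonneg _) hsub.eventuallyLE

theorem integral_sq_integral_kernel_mul_le (hβ : 0 < β)
    (hc : ∀ n : ℕ, c n ≤ -(β * ((n:ℝ) + 1) ^ 2)) (ha : Summable fun n => a n ^ 2)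
    (hk : ∀ x y, 0 ≤ y → y ≤ x → x ≤ 1 → k x y = ∑' n, a n * exp (c n * (x - y)))
    (hg : MemLp g 2 (volume.restrict (Set.Ioc 0 1))) :
    ∫ x in 0..1, (∫ y in 0..x, k x y * g y) ^ 2 ≤
      (∑' n, a n ^ 2) * (∑' n : ℕ, 1 / (β * ((n:ℝ) + 1) ^ 2)) * ∫ y in 0..1, g y ^ 2 := by
  have hbound : ∀ x ∈ Set.uIoc 0 1, ‖(∫ y in 0..x, k x y * g y) ^ 2‖ ≤
      (∑' n, a n ^ 2) * (∑' n : ℕ, 1 / (β * ((n:ℝ) + 1) ^ 2)) * ∫ y in Set.Ioc 0 1, g y ^ 2 := by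
    intro x hx
    rw [Set.uIoc_of_le zero_le_one] at hx
    rw [Real.norm_of_nonneg (sq_nonneg _)]
    exact sq_integral_kernel_mul_le hβ hc ha hk hg hx.1.le hx.2
  simpa [intervalIntegral.integral_of_le zero_le_one (f := fun y => g y ^ 2)] using
    (le_abs_self _).trans (intervalIntegral.norm_integral_le_of_norm_le_const hbound)

end VolterraKernel

/-- For `k(x,y) = −Σₙ (−1)ⁿ nπ e^{D₀(λ−n²π²)(x−y)} pₙ` with `0 < λ < π²`, `D₀ > 0`
and `Σ (nπ)² pₙ² < ∞`, there is `B₃ > 0` such that every `g ∈ L²(0,1)` satisfies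
`∫₀¹ (∫₀ˣ k(x,y) g(y) dy)² dx ≤ B₃ · ∫₀¹ g²`. -/
theorem stmt_6 (l D0 : ℝ) (hl : 0 < l) (hD0 : 0 < D0) (hlt : l < π^2)
    (p : ℕ → ℝ) (hp : Summable (fun n : ℕ => ((((n:ℝ)+1)*π)^2) * (p n)^2))
    (k : ℝ → ℝ → ℝ)
    (hk : ∀ x y, 0 ≤ y → y ≤ x → x ≤ 1 → k x y = -∑' n : ℕ,
      (-1:ℝ)^(n+1) * (((n:ℝ)+1)*π) * Real.exp (D0*(l - ((n:ℝ)+1)^2*π^2)*(x-y)) * p n) :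
    ∃ B3 > 0, ∀ g : ℝ → ℝ,
      MemLp g 2 (volume.restrict (Set.Ioc (0:ℝ) 1)) →
      (∫ x in (0:ℝ)..1, (∫ y in (0:ℝ)..x, k x y * g y)^2) ≤
        B3 * ∫ y in (0:ℝ)..1, (g y)^2 := by
  set β := D0 * (π ^ 2 - l)
  have hβ : 0 < β := mul_pos hD0 (by linarith)
  have hc : ∀ n : ℕ, D0 * (l - ((n:ℝ) + 1) ^ 2 * π ^ 2) ≤ -(β * ((n:ℝ) + 1) ^ 2) := by
    intro n
    have : l ≤ l * ((n:ℝ) + 1) ^ 2 :=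
      le_mul_of_one_le_right hl.le (one_le_pow₀ (by linarith [n.cast_nonneg (α := ℝ)]))
    nlinarith
  have ha : Summable fun n : ℕ => ((-1) ^ n * (((n:ℝ) + 1) * π) * p n) ^ 2 :=
    hp.congr fun n => by
      rw [mul_pow _ (p n), mul_pow ((-1:ℝ) ^ n), ← pow_mul, pow_mul', neg_one_sq, one_pow, one_mul]
  have hk' : ∀ x y, 0 ≤ y → y ≤ x → x ≤ 1 → k x y = ∑' n : ℕ,
      (-1) ^ n * (((n:ℝ) + 1) * π) * p n * exp (D0 * (l - ((n:ℝ) + 1) ^ 2 * π ^ 2) * (x - y)) := by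
    intro x y hy hyx hx
    rw [hk x y hy hyx hx, ← tsum_neg]
    exact tsum_congr fun n => by ring
  refine ⟨(∑' n : ℕ, ((-1) ^ n * (((n:ℝ) + 1) * π) * p n) ^ 2) *
      (∑' n : ℕ, 1 / (β * ((n:ℝ) + 1) ^ 2)) + 1, by positivity, fun g hg => ?_⟩
  have hG : 0 ≤ ∫ y in (0:ℝ)..1, g y ^ 2 :=
    intervalIntegral.integral_nonneg zero_le_one fun _ _ => sq_nonneg _
  exact (integral_sq_integral_kernel_mul_le hβ hc ha hk' hg).trans
    (mul_le_mul_of_nonneg_right (le_add_of_nonneg_right zero_le_one) hG)
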